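/- arXiv:2409.18623 — 2 statements merged into one kernel-verified Lean document; each statement's English description precedes it below -/
import Mathlib

section
/- Let ν = (ν₁ ≥ … ≥ ν_{k+1} ≥ 0) be a weakly decreasing sequence of nonnegative integers. The product ∏_{1≤i<j≤k+1} (ν_i - ν_j + j - i)/(j - i) is a positive integer (i.e., the Weyl dimension formula value is a positive integer). -/
open Finset in

/-- Unfold a product over ordered pairs into an iterated product. -/
lemma prod_pairs {M : Type*} [CommMonoid M] (n : ℕ) (f : Fin n → Fin n → M) :
    ∏ p ∈ Finset.univ.filter (fun p : Fin n × Fin n => p.1 < p.2), f p.1 p.2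
      = ∏ i, ∏ j ∈ Finset.Ioi i, f i j := by
  rw [Finset.prod_filter, ← Finset.univ_product_univ, Finset.prod_product]
  refine Finset.prod_congr rfl fun i _ => ?_
  rw [← Finset.prod_filter]
  congr 1
  ext j; simp

/-- Vandermonde determinant of a nat sequence factors through the binomial matrix. -/
lemma vdm_eq (n : ℕ) (w : Fin n → ℕ) :
    (Matrix.vandermonde (fun i => ((w i : ℚ)))).det
      = (∏ j : Fin n, (((j : ℕ).factorial : ℕ) : ℚ)) *
        (Matrix.of (fun i j : Fin n => (((w i).choose (j : ℕ) : ℕ) : ℚ))).det := by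
  rw [Matrix.det_eval_matrixOfPolynomials_eq_det_vandermonde _
    (fun j : Fin n => descPochhammer ℚ (j : ℕ))
    (fun j => descPochhammer_natDegree _ _) (fun j => monic_descPochhammer _ _)]
  rw [← Matrix.det_mul_row]
  congr 1
  ext i j
  simp only [Matrix.of_apply, descPochhammer_eval_eq_descFactorial,
    Nat.descFactorial_eq_factorial_mul_choose]
  push_cast
  ring

lemma choose_id_det (n : ℕ) :
    (Matrix.of (fun i j : Fin n => ((((i : ℕ)).choose (j : ℕ) : ℕ) : ℚ))).det = 1 := by
  rw [Matrix.det_of_lowerTriangular]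
  · simp
  · intro i j h
    simp only [Matrix.of_apply, Nat.cast_eq_zero]
    exact Nat.choose_eq_zero_of_lt (by simpa using h)

theorem test (k : ℕ) (ν : Fin (k + 1) → ℕ)
    (hdec : ∀ i j : Fin (k + 1), i ≤ j → ν j ≤ ν i) :
    True := trivial

/-- The Weyl dimension formula value for a partition `ν` with `k+1` parts. -/
noncomputable def weylDim (k : ℕ) (ν : Fin (k + 1) → ℕ) : ℚ :=
  ∏ p ∈ Finset.univ.filter (fun p : Fin (k + 1) × Fin (k + 1) => p.1 < p.2),
    (((ν p.1 : ℚ) - (ν p.2 : ℚ) + ((p.2 : ℕ) : ℚ) - ((p.1 : ℕ) : ℚ)) /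
      (((p.2 : ℕ) : ℚ) - ((p.1 : ℕ) : ℚ)))

/-- for a weakly decreasing `ν : Fin (k+1) → ℕ`, the Weyl dimension
formula value `∏_{1≤i<j≤k+1} (ν_i - ν_j + j - i)/(j - i)` is a positive integer. -/
theorem weylDim_posInt (k : ℕ) (ν : Fin (k + 1) → ℕ)
    (hdec : ∀ i j : Fin (k + 1), i ≤ j → ν j ≤ ν i) :
    ∃ m : ℕ, 0 < m ∧ weylDim k ν = (m : ℚ) := by
  classical
  set N := (Finset.univ.filter (fun p : Fin (k+1) × Fin (k+1) => p.1 < p.2)) with hN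
  have hpos : 0 < weylDim k ν := by
    apply Finset.prod_pos
    intro p hp
    have hlt : p.1 < p.2 := (Finset.mem_filter.mp hp).2
    have h1 : ((p.1 : ℕ) : ℚ) < ((p.2 : ℕ) : ℚ) := by exact_mod_cast hlt
    have h2 : (ν p.2 : ℚ) ≤ (ν p.1 : ℚ) := by exact_mod_cast hdec p.1 p.2 hlt.le
    exact div_pos (by linarith) (by linarith)
  set l : Fin (k+1) → ℕ := fun i => ν i + (k - (i : ℕ)) with hl
  -- split weylDim into numerator and denominator products
  have hsplit : weylDim k ν =
      (∏ p ∈ N, ((ν p.1 : ℚ) - (ν p.2 : ℚ) + ((p.2 : ℕ) : ℚ) - ((p.1 : ℕ) : ℚ))) /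
      (∏ p ∈ N, (((p.2 : ℕ) : ℚ) - ((p.1 : ℕ) : ℚ))) := by
    rw [weylDim, ← Finset.prod_div_distrib]
  have hden : (∏ p ∈ N, (((p.2 : ℕ) : ℚ) - ((p.1 : ℕ) : ℚ)))
      = (Matrix.vandermonde fun i : Fin (k+1) => (((i : ℕ) : ℕ) : ℚ)).det := by
    rw [hN, prod_pairs (k+1) (fun i j : Fin (k+1) => ((j : ℕ) : ℚ) - ((i : ℕ) : ℚ)),
      Matrix.det_vandermonde]
  have hnum : (∏ p ∈ N, ((ν p.1 : ℚ) - (ν p.2 : ℚ) + ((p.2 : ℕ) : ℚ) - ((p.1 : ℕ) : ℚ)))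
      = (-1 : ℚ) ^ N.card * (Matrix.vandermonde fun i : Fin (k+1) => ((l i : ℕ) : ℚ)).det := by
    have step : ∀ p ∈ N, ((ν p.1 : ℚ) - (ν p.2 : ℚ) + ((p.2 : ℕ) : ℚ) - ((p.1 : ℕ) : ℚ))
        = (-1 : ℚ) * (((l p.2 : ℕ) : ℚ) - ((l p.1 : ℕ) : ℚ)) := by
      intro p hp
      have h1 : (p.1 : ℕ) ≤ k := Fin.is_le _
      have h2 : (p.2 : ℕ) ≤ k := Fin.is_le _
      simp only [hl]
      push_cast [Nat.cast_sub h1, Nat.cast_sub h2]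
      ring
    rw [Finset.prod_congr rfl step, Finset.prod_mul_distrib, Finset.prod_const,
      hN, prod_pairs (k+1) (fun i j : Fin (k+1) => ((l j : ℕ) : ℚ) - ((l i : ℕ) : ℚ)),
      Matrix.det_vandermonde]
  set Mz : Matrix (Fin (k+1)) (Fin (k+1)) ℤ :=
    Matrix.of (fun i j : Fin (k+1) => ((l i).choose (j : ℕ) : ℤ)) with hMz
  have hcast : (Matrix.of (fun i j : Fin (k+1) => (((l i).choose (j : ℕ) : ℕ) : ℚ))).det
      = ((Mz.det : ℤ) : ℚ) := by
    have h := RingHom.map_det (Int.castRingHom ℚ) Mz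
    simp only [eq_intCast] at h ⊢
    rw [h]
    congr 1
  have hF : (∏ j : Fin (k+1), (((j : ℕ).factorial : ℕ) : ℚ)) ≠ 0 := by
    apply Finset.prod_ne_zero_iff.mpr
    intro j _
    exact_mod_cast (Nat.factorial_pos _).ne'
  have hwd : weylDim k ν = ((-1 : ℤ) ^ N.card * Mz.det : ℤ) := by
    rw [hsplit, hnum, hden, vdm_eq, vdm_eq, choose_id_det, hcast, mul_one]
    push_cast
    field_simp
  have hz : (0 : ℤ) < (-1 : ℤ) ^ N.card * Mz.det := by
    have : (0 : ℚ) < (((-1 : ℤ) ^ N.card * Mz.det : ℤ) : ℚ) := hwd ▸ hpos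
    exact_mod_cast this
  refine ⟨((-1 : ℤ) ^ N.card * Mz.det).toNat, by omega, ?_⟩
  rw [hwd]
  exact_mod_cast (congrArg (fun z : ℤ => (z : ℚ)) (Int.toNat_of_nonneg hz.le)).symm
end

section
/- Let ρ = (n, n−1, …, 1, 0) ∈ ℤ^{n+1} and let ν ∈ ℤ^{n+1}. Bott's algorithm applied to ν stops in the singular case (some consecutive difference ν_{l+1} − ν_l = 1 at the first ascent at some stage) if and only if ν + ρ has two equal entries; otherwise it terminates at the unique weakly decreasing sequence w(ν+ρ) − ρ, where w is the permutation sorting ν + ρ into strictly decreasing order, and the total number of swap steps equals the number of inversions of w. -/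
/-- The swap step of Bott's algorithm at position `l`:
replace `(ν l, ν (l+1))` by `(ν (l+1) - 1, ν l + 1)`. -/
def bottSwap (ν : ℕ → ℤ) (l : ℕ) : ℕ → ℤ :=
  Function.update (Function.update ν l (ν (l + 1) - 1)) (l + 1) (ν l + 1)

/-- `l` is the first ascent of the sequence `ν` of length `n+1` (entries `ν 0,…,ν n`). -/
def FirstAscent (n : ℕ) (ν : ℕ → ℤ) (l : ℕ) : Prop :=
  l < n ∧ ν l < ν (l + 1) ∧ ∀ i < l, ν (i + 1) ≤ ν i

/-- One swap step of Bott's algorithm: at the first ascent `l`, the difference is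
not `1`, and the entries at `l`, `l+1` are swapped in the dotted sense. -/
def IsBottStep (n : ℕ) (ν ν' : ℕ → ℤ) : Prop :=
  ∃ l, FirstAscent n ν l ∧ ν (l + 1) - ν l ≠ 1 ∧ ν' = bottSwap ν l

/-- The sequence `ν 0, …, ν n` is weakly decreasing (Bott's algorithm stops with output). -/
def BottWeaklyDecr (n : ℕ) (ν : ℕ → ℤ) : Prop :=
  ∀ i < n, ν (i + 1) ≤ ν i

/-- Bott's algorithm stops in the singular case: the first ascent has difference `1`. -/
def BottSingular (n : ℕ) (ν : ℕ → ℤ) : Prop :=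
  ∃ l, FirstAscent n ν l ∧ ν (l + 1) - ν l = 1

/-- A terminal state of Bott's algorithm. -/
def BottTerminal (n : ℕ) (ν : ℕ → ℤ) : Prop :=
  BottWeaklyDecr n ν ∨ BottSingular n ν

/-- The number of inversions (Coxeter length) of a permutation of `Fin (n+1)`. -/
def invCount (n : ℕ) (w : Equiv.Perm (Fin (n + 1))) : ℕ :=
  (Finset.univ.filter fun p : Fin (n + 1) × Fin (n + 1) =>
    p.1 < p.2 ∧ w p.2 < w p.1).card

/-! Write `μ = ν + ρ` (`addRho n ν`, indexed by `Fin (n + 1)`). A Bott step at the first ascent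
`l` swaps `μ l` and `μ (l+1)` where `μ l < μ (l+1)`, the singular stop is the case
`μ l = μ (l+1)`, and `ν` is weakly decreasing iff `μ` is strictly decreasing. So the algorithm
sorts `μ` by adjacent transpositions: the entries of `μ` are only permuted, and each step removes
exactly one pair `i < j` with `μ i ≤ μ j`. The algorithm therefore halts; it halts singularly iff
`μ` has a repeated entry, and otherwise at the decreasing rearrangement of `μ`, after as many
steps as there were such pairs initially, which for distinct entries is the number of inversions
of the sorting permutation. -/

open Finset Function

section WeakAscents

variable {ι α : Type*} [LinearOrder ι] [Fintype ι] [LinearOrder α]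

def weakAscents (μ : ι → α) : Finset (ι × ι) :=
  {p | p.1 < p.2 ∧ μ p.1 ≤ μ p.2}

theorem mem_weakAscents {μ : ι → α} {p : ι × ι} :
    p ∈ weakAscents μ ↔ p.1 < p.2 ∧ μ p.1 ≤ μ p.2 := by
  simp [weakAscents]

theorem weakAscents_eq_empty_iff {μ : ι → α} : weakAscents μ = ∅ ↔ StrictAnti μ := by
  simp [weakAscents, filter_eq_empty_iff, StrictAnti]

omit [Fintype ι] in
theorem CovBy.swap_lt_swap_iff {a b x y : ι} (hab : a ⋖ b) (hxy : (x, y) ≠ (a, b))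
    (hyx : (x, y) ≠ (b, a)) : Equiv.swap a b x < Equiv.swap a b y ↔ x < y := by
  have side : ∀ c, c ≠ a → c ≠ b → (a < c ↔ b < c) ∧ (c < a ↔ c < b) := fun c hca hcb =>
    ⟨by rw [← Set.mem_Ioi, hab.Ioi_eq, Set.mem_Ici, hcb.symm.le_iff_lt],
     by rw [← hca.le_iff_lt, ← Set.mem_Iic, ← hab.Iio_eq, Set.mem_Iio]⟩
  have hlt := hab.lt
  rcases eq_or_ne x a with hxa | hxa <;> rcases eq_or_ne x b with hxb | hxb <;>
    rcases eq_or_ne y a with hya | hya <;> rcases eq_or_ne y b with hyb | hyb <;>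
    simp_all [Equiv.swap_apply_of_ne_of_ne]

theorem card_weakAscents_comp_swap {μ : ι → α} {a b : ι} (hab : a ⋖ b) (hμ : μ a < μ b) :
    #(weakAscents (μ ∘ Equiv.swap a b)) + 1 = #(weakAscents μ) := by
  set τ := Equiv.swap a b
  have hmem : (a, b) ∈ weakAscents μ := mem_weakAscents.2 ⟨hab.lt, hμ.le⟩
  have herase : (weakAscents μ).erase (a, b) =
      (weakAscents (μ ∘ τ)).map (τ.prodCongr τ).toEmbedding := by
    ext ⟨x, y⟩
    simp only [mem_erase, mem_map_equiv, Equiv.prodCongr_symm, Equiv.symm_swap,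
      Equiv.prodCongr_apply, Prod.map, mem_weakAscents, comp_apply, τ, Equiv.swap_apply_self]
    by_cases h1 : (x, y) = (a, b)
    · obtain ⟨rfl, rfl⟩ := h1
      simp [hμ.not_gt, hab.le]
    by_cases h2 : (x, y) = (b, a)
    · simp_all
    rw [hab.swap_lt_swap_iff h1 h2]
    tauto
  rw [← card_map, ← herase, card_erase_add_one hmem]

theorem card_weakAscents_eq_invCount {n : ℕ} {μ : Fin (n + 1) → α}
    {w : Equiv.Perm (Fin (n + 1))} (hw : StrictAnti (μ ∘ w)) : #(weakAscents μ) = invCount n w := by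
  refine card_bij' (fun p _ => (w⁻¹ p.2, w⁻¹ p.1)) (fun p _ => (w p.2, w p.1)) ?_ ?_ ?_ ?_
  · rintro ⟨x, y⟩ hp
    obtain ⟨hxy, hμ⟩ := mem_weakAscents.1 hp
    have hle : w⁻¹ y ≤ w⁻¹ x := (StrictAnti.le_iff_ge hw).1 (by simpa using hμ)
    simpa [hxy] using hle.lt_of_ne (by simpa using hxy.ne')
  · rintro ⟨x, y⟩ hp
    simp only [mem_filter, mem_univ, true_and] at hp
    exact mem_weakAscents.2 ⟨hp.2, (hw hp.1).le⟩
  · simp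
  · simp

omit [Fintype ι] in
theorem comp_eq_comp_of_strictAnti [WellFoundedGT ι] {μ : ι → α} {σ τ : Equiv.Perm ι}
    (hσ : StrictAnti (μ ∘ σ)) (hτ : StrictAnti (μ ∘ τ)) : μ ∘ σ = μ ∘ τ :=
  (hσ.range_inj hτ).1 (by rw [EquivLike.range_comp, EquivLike.range_comp])

end WeakAscents

section Chain

variable {α : Type*} {r : α → α → Prop}

theorem exists_chain_of_decreasing {T : α → Prop} (φ : α → ℕ) (hφ : ∀ a b, r a b → φ b < φ a)
    (hT : ∀ a, ¬T a → ∃ b, r a b) (a : α) :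
    ∃ k, ∃ f : ℕ → α, f 0 = a ∧ (∀ i < k, r (f i) (f (i + 1))) ∧ T (f k) := by
  induction hn : φ a using Nat.strong_induction_on generalizing a with
  | _ m ih =>
    by_cases ha : T a
    · exact ⟨0, fun _ => a, rfl, by simp, ha⟩
    obtain ⟨b, hab⟩ := hT a ha
    obtain ⟨k, f, rfl, hf, hk⟩ := ih _ (hn ▸ hφ a _ hab) _ rfl
    refine ⟨k + 1, fun | 0 => a | i + 1 => f i, rfl, ?_, hk⟩
    rintro (_ | i) hi
    · exact hab
    · exact hf i (by omega)

theorem chain_last_of_invariant (P : α → Prop) (hP : ∀ a b, r a b → P a → P b) {f : ℕ → α}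
    {k : ℕ} (hf : ∀ i < k, r (f i) (f (i + 1))) (h0 : P (f 0)) : P (f k) := by
  induction k with
  | zero => exact h0
  | succ k ih => exact hP _ _ (hf k k.lt_succ_self) (ih fun i hi => hf i (by omega))

theorem measure_chain_last_add_length (φ : α → ℕ) (hφ : ∀ a b, r a b → φ b + 1 = φ a)
    {f : ℕ → α} {k : ℕ} (hf : ∀ i < k, r (f i) (f (i + 1))) : φ (f k) + k = φ (f 0) := by
  induction k with
  | zero => rfl
  | succ k ih =>
    rw [← ih fun i hi => hf i (by omega), ← hφ _ _ (hf k k.lt_succ_self)]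
    ring

end Chain

section Bott

variable {n : ℕ} {ν ν' : ℕ → ℤ}

def addRho (n : ℕ) (ν : ℕ → ℤ) (i : Fin (n + 1)) : ℤ := ν i + ((n : ℤ) - ((i : ℕ) : ℤ))

theorem addRho_bottSwap (l : Fin n) :
    addRho n (bottSwap ν l) = addRho n ν ∘ Equiv.swap l.castSucc l.succ := by
  funext i
  simp only [addRho, bottSwap, comp_apply, Equiv.swap_apply_def, update_apply, Fin.ext_iff,
    Fin.val_castSucc, Fin.val_succ]
  split_ifs <;> first | omega | (simp_all; try omega)

theorem bottWeaklyDecr_iff_strictAnti : BottWeaklyDecr n ν ↔ StrictAnti (addRho n ν) := by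
  simp only [Fin.strictAnti_iff_succ_lt, addRho, Fin.val_succ, Fin.val_castSucc, Fin.forall_iff,
    BottWeaklyDecr]
  refine forall₂_congr fun i hi => ?_
  push_cast
  omega

theorem IsBottStep.exists_swap (h : IsBottStep n ν ν') :
    ∃ l : Fin n, addRho n ν l.castSucc < addRho n ν l.succ ∧
      addRho n ν' = addRho n ν ∘ Equiv.swap l.castSucc l.succ := by
  obtain ⟨l, ⟨hl, hasc, -⟩, hne, rfl⟩ := h
  refine ⟨⟨l, hl⟩, ?_, addRho_bottSwap (ν := ν) ⟨l, hl⟩⟩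
  simp only [addRho, Fin.val_succ, Fin.val_castSucc]
  push_cast
  omega

theorem BottSingular.not_injective (h : BottSingular n ν) : ¬Injective (addRho n ν) := by
  obtain ⟨l, ⟨hl, -, -⟩, hone⟩ := h
  intro hinj
  refine (Fin.castSucc_lt_succ (i := ⟨l, hl⟩)).ne (hinj ?_)
  simp only [addRho, Fin.val_succ, Fin.val_castSucc]
  push_cast
  omega

theorem exists_isBottStep_of_not_bottTerminal (h : ¬BottTerminal n ν) :
    ∃ ν', IsBottStep n ν ν' := by
  simp only [BottTerminal, not_or] at h
  obtain ⟨hdecr, hsing⟩ := h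
  have hasc : ∃ l, l < n ∧ ν l < ν (l + 1) := by simpa [BottWeaklyDecr] using hdecr
  have hfirst : FirstAscent n ν (Nat.find hasc) := by
    refine ⟨(Nat.find_spec hasc).1, (Nat.find_spec hasc).2, fun i hi => ?_⟩
    exact not_lt.1 (not_and.1 (Nat.find_min hasc hi) (hi.trans (Nat.find_spec hasc).1))
  exact ⟨_, _, hfirst, fun hone => hsing ⟨_, hfirst, hone⟩, rfl⟩

theorem not_injective_addRho_iff :
    ¬Injective (addRho n ν) ↔
      ∃ i j, i < j ∧ j ≤ n ∧ ν i + ((n : ℤ) - (i : ℤ)) = ν j + ((n : ℤ) - (j : ℤ)) := by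
  constructor
  · intro h
    simp only [Injective, not_forall] at h
    obtain ⟨a, b, hab, hne⟩ := h
    rcases lt_or_gt_of_ne hne with hlt | hlt
    · exact ⟨a, b, hlt, by omega, hab⟩
    · exact ⟨b, a, hlt, by omega, hab.symm⟩
  · rintro ⟨i, j, hij, hj, he⟩ hinj
    have := congrArg Fin.val (hinj (a₁ := ⟨i, by omega⟩) (a₂ := ⟨j, by omega⟩) he)
    simp only at this
    omega

theorem exists_perm_addRho_of_bottRun {f : ℕ → ℕ → ℤ} {k : ℕ}
    (hf : ∀ i < k, IsBottStep n (f i) (f (i + 1))) :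
    ∃ σ : Equiv.Perm (Fin (n + 1)), addRho n (f k) = addRho n (f 0) ∘ σ := by
  refine chain_last_of_invariant (fun x => ∃ σ : Equiv.Perm _, addRho n x = addRho n (f 0) ∘ σ)
    ?_ hf ⟨1, rfl⟩
  rintro a b hab ⟨σ, hσ⟩
  obtain ⟨l, -, hb⟩ := hab.exists_swap
  exact ⟨σ * Equiv.swap l.castSucc l.succ, by rw [hb, hσ]; rfl⟩

theorem injective_addRho_of_bottRun_iff {f : ℕ → ℕ → ℤ} {k : ℕ}
    (hf : ∀ i < k, IsBottStep n (f i) (f (i + 1))) :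
    Injective (addRho n (f k)) ↔ Injective (addRho n (f 0)) := by
  obtain ⟨σ, hσ⟩ := exists_perm_addRho_of_bottRun hf
  rw [hσ, EquivLike.injective_comp]

theorem IsBottStep.card_weakAscents_add_one (h : IsBottStep n ν ν') :
    #(weakAscents (addRho n ν')) + 1 = #(weakAscents (addRho n ν)) := by
  obtain ⟨l, hlt, h'⟩ := h.exists_swap
  rw [h']
  refine card_weakAscents_comp_swap ⟨Fin.castSucc_lt_succ, fun c h1 h2 => ?_⟩ hlt
  rw [Fin.lt_def, Fin.val_castSucc] at h1
  rw [Fin.lt_def, Fin.val_succ] at h2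
  omega

theorem card_weakAscents_addRho_add_length {f : ℕ → ℕ → ℤ} {k : ℕ}
    (hf : ∀ i < k, IsBottStep n (f i) (f (i + 1))) :
    #(weakAscents (addRho n (f k))) + k = #(weakAscents (addRho n (f 0))) :=
  measure_chain_last_add_length (fun x => #(weakAscents (addRho n x)))
    (fun _ _ hab => hab.card_weakAscents_add_one) hf

theorem exists_bottRun_terminal (n : ℕ) (ν : ℕ → ℤ) :
    ∃ k, ∃ f : ℕ → ℕ → ℤ, f 0 = ν ∧ (∀ i < k, IsBottStep n (f i) (f (i + 1))) ∧
      BottTerminal n (f k) :=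
  exists_chain_of_decreasing (r := IsBottStep n) (fun x => #(weakAscents (addRho n x)))
    (fun _ _ hab => by have := hab.card_weakAscents_add_one; omega)
    (fun _ => exists_isBottStep_of_not_bottTerminal) ν

end Bott

/-- with `ρ = (n, n−1, …, 0)` and `μ = ν + ρ`, Bott's algorithm stops in
the singular case iff `μ` has two equal entries; and if `w` sorts `μ` into strictly
decreasing order, the algorithm ends, after exactly `inv(w)` swap steps, at the
weakly decreasing sequence `w(ν+ρ) − ρ`. -/
theorem bott_dotted_action (n : ℕ) (ν : ℕ → ℤ) :
    letI ρ : ℕ → ℤ := fun i => (n : ℤ) - (i : ℤ)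
    letI μ : ℕ → ℤ := fun i => ν i + ρ i
    ((∃ k, ∃ f : ℕ → (ℕ → ℤ), f 0 = ν ∧ (∀ i < k, IsBottStep n (f i) (f (i + 1))) ∧
        BottSingular n (f k)) ↔
      ∃ i j, i < j ∧ j ≤ n ∧ μ i = μ j) ∧
    (∀ w : Equiv.Perm (Fin (n + 1)),
      (∀ i j : Fin (n + 1), i < j → μ (w j : ℕ) < μ (w i : ℕ)) →
      ∃ f : ℕ → (ℕ → ℤ), f 0 = ν ∧
        (∀ i < invCount n w, IsBottStep n (f i) (f (i + 1))) ∧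
        BottWeaklyDecr n (f (invCount n w)) ∧
        ∀ i : Fin (n + 1), f (invCount n w) (i : ℕ) = μ (w i : ℕ) - ρ (i : ℕ)) := by
  refine ⟨⟨?_, fun hrep => ?_⟩, fun w hw => ?_⟩
  · rintro ⟨k, f, rfl, hf, hsing⟩
    exact not_injective_addRho_iff.1 fun hinj =>
      hsing.not_injective ((injective_addRho_of_bottRun_iff hf).2 hinj)
  · obtain ⟨k, f, rfl, hf, hterm⟩ := exists_bottRun_terminal n ν
    refine ⟨k, f, rfl, hf, hterm.resolve_left fun hdecr => not_injective_addRho_iff.2 hrep ?_⟩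
    exact (injective_addRho_of_bottRun_iff hf).1 (bottWeaklyDecr_iff_strictAnti.1 hdecr).injective
  · have hsorted : StrictAnti (addRho n ν ∘ w) := hw
    obtain ⟨k, f, rfl, hf, hterm⟩ := exists_bottRun_terminal n ν
    have hdecr : BottWeaklyDecr n (f k) := hterm.resolve_right fun hsing =>
      hsing.not_injective <| (injective_addRho_of_bottRun_iff hf).2 <|
        (EquivLike.injective_comp w _).1 hsorted.injective
    have hanti := bottWeaklyDecr_iff_strictAnti.1 hdecr
    obtain rfl : k = invCount n w := by
      have hlen := card_weakAscents_addRho_add_length hf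
      rwa [weakAscents_eq_empty_iff.2 hanti, card_empty, zero_add,
        card_weakAscents_eq_invCount hsorted] at hlen
    obtain ⟨σ, hσ⟩ := exists_perm_addRho_of_bottRun hf
    refine ⟨f, rfl, hf, hdecr, fun i => ?_⟩
    have hsort := congrFun (comp_eq_comp_of_strictAnti (hσ ▸ hanti) hsorted) i
    have hi := congrFun hσ i
    simp only [comp_apply, addRho] at hsort hi
    beta_reduce
    omega
end
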